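/- In the setting above, for f ∈ A one has val_Y(σ(f) - f) ≥ val_Y(σ(z) - z), with equality if and only if the differential d(f̄) of the reduction f̄ ∈ Ā is nonzero. -/

import Mathlib

open PowerSeries

/-- The Gauss valuation on `R[[z]]` (measured in multiples of the valuation of the
uniformizer `π`): `val_Y(Σ aᵢ zⁱ) = min_i val(aᵢ)`. -/
noncomputable def gaussVal {R : Type*} [CommRing R] (π : R) (f : PowerSeries R) : ℕ∞ :=
  ⨅ i : ℕ, emultiplicity π (PowerSeries.coeff i f)

/-- Reduction mod `π` : `R[[z]] → (R/π)[[z]]`. -/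
noncomputable def redMod {R : Type*} [CommRing R] (π : R) :
    PowerSeries R →+* PowerSeries (R ⧸ Ideal.span {π}) :=
  PowerSeries.map (Ideal.Quotient.mk (Ideal.span {π}))

/-!
Write `t = σ X - X`. Truncating `f` at order `N + 2` and expanding the polynomial part by Taylor's
formula at `X` with increment `t` shows that `σ f - f - t f'` lies in the ideal `(t², X^(N+1))`,
so its `N`-th coefficient is divisible by `π^(2m)`, where `m = val_Y(t) ≥ 1`. Hence, writing `t = π^m t₀` with `t₀ ≢ 0 mod π`,
`σ f - f = π^m (t₀ f' + π e)`, and equality of valuations holds iff `t̄₀ f̄' ≠ 0` in the domain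
`k[[z]]`, i.e. iff `f̄' ≠ 0`.
-/

namespace PowerSeries

variable {R : Type*} [CommRing R]

theorem C_dvd_iff_forall_dvd_coeff (c : R) (g : R⟦X⟧) : C c ∣ g ↔ ∀ n, c ∣ coeff n g := by
  refine ⟨fun ⟨h, hg⟩ n => ⟨coeff n h, by rw [hg, coeff_C_mul]⟩, fun hg => ?_⟩
  choose a ha using hg
  exact ⟨mk a, ext fun n => by rw [coeff_C_mul, coeff_mk, ← ha]⟩

theorem X_pow_dvd_sub_trunc (f : R⟦X⟧) (n : ℕ) : X ^ n ∣ f - (trunc n f : R⟦X⟧) := by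
  refine X_pow_dvd_iff.mpr fun m hm => ?_
  rw [map_sub, Polynomial.coeff_coe, coeff_trunc, if_pos hm, sub_self]

theorem X_pow_dvd_derivative_X_pow_succ_mul (n : ℕ) (h : R⟦X⟧) :
    X ^ n ∣ d⁄dX R (X ^ (n + 1) * h) := by
  rw [Derivation.leibniz, derivative_pow, derivative_X, smul_eq_mul, smul_eq_mul,
    Nat.add_sub_cancel, pow_succ]
  exact ⟨X * d⁄dX R h + h * ((n + 1 : ℕ) : R⟦X⟧), by ring⟩

variable {F : Type*} [FunLike F R⟦X⟧ R⟦X⟧] [AlgHomClass F R R⟦X⟧ R⟦X⟧]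

theorem exists_map_coe_eq_add_derivative_mul (σ : F) (P : Polynomial R) :
    ∃ k : R⟦X⟧, σ P = (P : R⟦X⟧) + d⁄dX R P * (σ X - X) + k * (σ X - X) ^ 2 := by
  have heval (Q : Polynomial R) (x : R⟦X⟧) : (Q.map C).eval x = Polynomial.aeval x Q := by
    rw [Polynomial.eval_map, Polynomial.aeval_def, algebraMap_eq]
  have hcoe (Q : Polynomial R) : (Q : R⟦X⟧) = Polynomial.aeval X Q := by
    rw [Polynomial.aeval_def, algebraMap_eq, Polynomial.eval₂_C_X_eq_coe]
  obtain ⟨k, hk⟩ := Polynomial.binomExpansion (P.map C) X (σ X - X)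
  rw [add_sub_cancel, Polynomial.derivative_map, heval, heval, heval] at hk
  refine ⟨k, ?_⟩
  have hσ : σ P = Polynomial.aeval (σ X) P := by
    rw [hcoe P, ← AlgHom.coe_coe σ, Polynomial.aeval_algHom_apply]
  rw [hσ, hk, ← hcoe, ← hcoe, derivative_coe]

theorem map_sub_sub_mul_derivative_mem_span (σ : F) (f : R⟦X⟧) (N : ℕ) :
    σ f - f - (σ X - X) * d⁄dX R f ∈ Ideal.span {(σ X - X) ^ 2, X ^ (N + 1)} := by
  set t := σ X - X
  set J := Ideal.span {t ^ 2, X ^ (N + 1)}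
  set P := trunc (N + 2) f
  obtain ⟨h, hh⟩ := X_pow_dvd_sub_trunc f (N + 2)
  have hf : f = (P : R⟦X⟧) + X ^ (N + 2) * h := eq_add_of_sub_eq' hh
  obtain ⟨k, hk⟩ := exists_map_coe_eq_add_derivative_mul σ P
  obtain ⟨q, hq⟩ : X ^ (N + 1) ∣ d⁄dX R (X ^ (N + 2) * h) :=
    X_pow_dvd_derivative_X_pow_succ_mul (N + 1) h
  have hσf : σ f = σ P + (X + t) ^ (N + 2) * σ h := by
    rw [hf, map_add, map_mul, map_pow, add_sub_cancel]
  have ht2 : t ^ 2 ∈ J := Ideal.subset_span (by simp)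
  have hX : X ^ (N + 1) ∈ J := Ideal.subset_span (by simp)
  -- each monomial `X ^ j * t ^ (N + 2 - j)` has `j ≥ N + 1` or `N + 2 - j ≥ 2`
  have hXt : (X + t) ^ (N + 2) ∈ J := J.add_pow_mem_of_pow_mem_of_le hX ht2 (by omega)
  have hsplit : σ f - f - t * d⁄dX R f
      = k * t ^ 2 + σ h * (X + t) ^ (N + 2) - (X * h + t * q) * X ^ (N + 1) := by
    rw [hσf, hk]
    conv_lhs => rw [hf, map_add, hq]
    ring
  rw [hsplit]
  exact J.sub_mem (J.add_mem (J.mul_mem_left _ ht2) (J.mul_mem_left _ hXt)) (J.mul_mem_left _ hX)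

theorem dvd_coeff_of_mem_span_X_pow {c : R} {a g : R⟦X⟧} (ha : C c ∣ a) {N : ℕ}
    (hg : g ∈ Ideal.span {a, X ^ (N + 1)}) : c ∣ coeff N g := by
  obtain ⟨u, v, rfl⟩ := Ideal.mem_span_pair.mp hg
  obtain ⟨a₀, rfl⟩ := ha
  rw [map_add, coeff_mul_X_pow', if_neg (by omega), add_zero, mul_left_comm, coeff_C_mul]
  exact dvd_mul_right _ _

theorem C_dvd_map_sub_sub_mul_derivative (σ : F) {c : R} (hc : C c ∣ (σ X - X) ^ 2)
    (f : R⟦X⟧) : C c ∣ σ f - f - (σ X - X) * d⁄dX R f :=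
  (C_dvd_iff_forall_dvd_coeff _ _).mpr fun N =>
    dvd_coeff_of_mem_span_X_pow hc (map_sub_sub_mul_derivative_mem_span σ f N)

theorem map_eq_self_of_map_X_eq_X {σ : F} (hσ : σ X = X) (f : R⟦X⟧) : σ f = f := by
  have h := C_dvd_map_sub_sub_mul_derivative σ (c := 0) (by simp [hσ]) f
  rwa [map_zero, zero_dvd_iff, hσ, sub_self, zero_mul, sub_zero, sub_eq_zero] at h

end PowerSeries

section gaussVal

variable {R : Type*} [CommRing R] {π : R}

theorem coe_le_gaussVal_iff {n : ℕ} {g : R⟦X⟧} : (n : ℕ∞) ≤ gaussVal π g ↔ C (π ^ n) ∣ g := by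
  simp only [gaussVal, le_iInf_iff, ← pow_dvd_iff_le_emultiplicity, C_dvd_iff_forall_dvd_coeff]

theorem redMod_eq_zero_iff {g : R⟦X⟧} : redMod π g = 0 ↔ C π ∣ g := by
  simp only [C_dvd_iff_forall_dvd_coeff, PowerSeries.ext_iff, redMod, coeff_map, map_zero,
    Ideal.Quotient.eq_zero_iff_mem, Ideal.mem_span_singleton]

theorem gaussVal_eq_zero_iff {g : R⟦X⟧} : gaussVal π g = 0 ↔ redMod π g ≠ 0 := by
  have h := coe_le_gaussVal_iff (π := π) (n := 1) (g := g)
  rw [Nat.cast_one, Order.one_le_iff_ne_zero, pow_one] at h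
  rw [ne_eq, redMod_eq_zero_iff, ← h, not_not]

theorem derivative_redMod (f : R⟦X⟧) :
    d⁄dX (R ⧸ Ideal.span {π}) (redMod π f) = redMod π (d⁄dX R f) := by
  ext n
  simp [redMod, coeff_derivative, coeff_map]

variable [IsDomain R]

theorem gaussVal_C_pow_mul (hπ : Prime π) (n : ℕ) (g : R⟦X⟧) :
    gaussVal π (C (π ^ n) * g) = n + gaussVal π g := by
  simp only [gaussVal, coeff_C_mul, emultiplicity_mul hπ, emultiplicity_pow_self_of_prime hπ,
    ENat.add_iInf]

theorem gaussVal_ne_top [WfDvdMonoid R] (hπ : ¬IsUnit π) {g : R⟦X⟧} (hg : g ≠ 0) :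
    gaussVal π g ≠ ⊤ := by
  obtain ⟨n, hn⟩ := not_forall.mp (mt PowerSeries.ext hg)
  rw [map_zero] at hn
  exact ne_top_of_le_ne_top (finiteMultiplicity_iff_emultiplicity_ne_top.mp
    (FiniteMultiplicity.of_not_isUnit hπ hn)) (iInf_le _ n)

theorem exists_eq_C_pow_gaussVal_mul [WfDvdMonoid R] (hπ : Prime π) {g : R⟦X⟧}
    (hg : g ≠ 0) : ∃ g₀, g = C (π ^ (gaussVal π g).toNat) * g₀ ∧ redMod π g₀ ≠ 0 := by
  have hfin := ENat.natCast_toNat (gaussVal_ne_top hπ.not_isUnit hg)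
  obtain ⟨g₀, hg₀⟩ := coe_le_gaussVal_iff.mp hfin.le
  refine ⟨g₀, hg₀, gaussVal_eq_zero_iff.mp ?_⟩
  have h := congrArg (gaussVal π) hg₀
  rw [gaussVal_C_pow_mul hπ, hfin] at h
  exact ENat.add_right_injective_of_ne_top (gaussVal_ne_top hπ.not_isUnit hg)
    (h.symm.trans (add_zero _).symm)

end gaussVal

theorem stmt3_general (R : Type*) [CommRing R] [IsDomain R] [IsDiscreteValuationRing R]
    (π : R) (hπ : Irreducible π)
    (σ : PowerSeries R ≃ₐ[R] PowerSeries R) (hσ : σ ≠ AlgEquiv.refl)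
    (hin : 0 < gaussVal π (σ (PowerSeries.X) - PowerSeries.X))
    (f : PowerSeries R) :
    gaussVal π (σ PowerSeries.X - PowerSeries.X) ≤ gaussVal π (σ f - f) ∧
    (gaussVal π (σ f - f) = gaussVal π (σ PowerSeries.X - PowerSeries.X) ↔
      PowerSeries.derivative (R ⧸ Ideal.span {π}) (redMod π f) ≠ 0) := by
  have hprime : Prime π := hπ.prime
  have : (Ideal.span {π}).IsPrime := (Ideal.span_singleton_prime hprime.ne_zero).mpr hprime
  set t := σ X - X
  have ht : t ≠ 0 := fun h => hσ (AlgEquiv.ext (map_eq_self_of_map_X_eq_X (sub_eq_zero.mp h)))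
  obtain ⟨t₀, ht₀, ht₀_red⟩ := exists_eq_C_pow_gaussVal_mul hprime ht
  set m := (gaussVal π t).toNat
  have hm : (m : ℕ∞) = gaussVal π t := ENat.natCast_toNat (gaussVal_ne_top hprime.not_isUnit ht)
  have hm_pos : 0 < m := by rw [← hm] at hin; exact_mod_cast hin
  have ht_sq : C (π ^ (m + 1)) ∣ t ^ 2 :=
    (map_dvd C (pow_dvd_pow π (by omega : m + 1 ≤ m + m))).trans
      ⟨t₀ ^ 2, by rw [ht₀, pow_add, map_mul]; ring⟩
  obtain ⟨e, he⟩ := C_dvd_map_sub_sub_mul_derivative σ ht_sq f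
  have hdecomp : σ f - f = C (π ^ m) * (t₀ * d⁄dX R f + C π * e) := by
    rw [← sub_add_cancel (σ f - f) (t * d⁄dX R f), he, ht₀, pow_succ, map_mul]
    ring
  have hCπ : redMod π (C π) = 0 := redMod_eq_zero_iff.mpr dvd_rfl
  rw [hdecomp, gaussVal_C_pow_mul hprime, hm, derivative_redMod]
  refine ⟨le_self_add, ?_⟩
  rw [(ENat.add_right_injective_of_ne_top (hm ▸ ENat.natCast_ne_top m)).eq_iff' (add_zero _),
    gaussVal_eq_zero_iff, map_add, map_mul, map_mul, hCπ, zero_mul, add_zero,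
    mul_ne_zero_iff, and_iff_right ht₀_red]

/-- In the setting of the derivation lemma (`R` a complete DVR of mixed characteristic
`(0,p)` with algebraically closed residue field, `σ ≠ id` an `R`-automorphism of
`A = R[[z]]` in the inertia group), for every `f ∈ A` one has
`val_Y(σ(f) - f) ≥ val_Y(σ(z) - z)`, with equality if and only if the (formal)
differential `d f̄` of the reduction `f̄ ∈ k[[z]]` is nonzero. -/
theorem stmt3 (R : Type*) [CommRing R] [IsDomain R] [IsDiscreteValuationRing R]
    [CharZero R] (π : R) (hπ : Irreducible π)
    [IsAdicComplete (Ideal.span {π}) R]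
    (p : ℕ) (hp : p.Prime) (hchar : CharP (R ⧸ Ideal.span {π}) p)
    (halgcl : ∀ f : Polynomial (R ⧸ Ideal.span {π}), f.Monic → 0 < f.degree →
      ∃ x, Polynomial.eval x f = 0)
    (σ : PowerSeries R ≃ₐ[R] PowerSeries R) (hσ : σ ≠ AlgEquiv.refl)
    (hin : 0 < gaussVal π (σ (PowerSeries.X) - PowerSeries.X))
    (f : PowerSeries R) :
    gaussVal π (σ PowerSeries.X - PowerSeries.X) ≤ gaussVal π (σ f - f) ∧
    (gaussVal π (σ f - f) = gaussVal π (σ PowerSeries.X - PowerSeries.X) ↔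
      PowerSeries.derivative (R ⧸ Ideal.span {π}) (redMod π f) ≠ 0) :=
  stmt3_general R π hπ σ hσ hin f
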